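/- arXiv:2307.14610 — 5 statements merged into one kernel-verified Lean document; each statement's English description precedes it below -/
import Mathlib

section
/- Let T be a non-negative self-adjoint bounded operator on a finite-dimensional (or separable) Hilbert space H with discrete spectrum 0 = λ₀ < λ₁ ≤ λ₂ ≤ ... (counted with multiplicities) and corresponding orthonormal basis of eigenvectors φ₀, φ₁, .... Let ψ ∈ H be nonzero. Then for every f ∈ H with ⟨ψ, f⟩ = 0, one has λ₁² · |⟨ψ, φ₀⟩|² / ‖ψ‖² · ‖f‖² ≤ ‖T f‖². -/
/-!
Write `f = c φ₀ + f'` and `ψ = a φ₀ + ψ'` with `f', ψ' ⟂ φ₀`. Every eigenvalue other than `λ₀`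
is at least `λ₁ ≥ 0`, so `‖T f‖ ≥ λ₁ ‖f'‖`. The orthogonality `⟪ψ, f⟫ = 0` reads
`conj a * c = -⟪ψ', f'⟫`, hence `|a| |c| ≤ ‖ψ'‖ ‖f'‖` by Cauchy–Schwarz, and then
`|a|² ‖f‖² = |a|² |c|² + |a|² ‖f'‖² ≤ (‖ψ'‖² + |a|²) ‖f'‖² = ‖ψ‖² ‖f'‖²`.
-/
open scoped InnerProductSpace ComplexConjugate

namespace OrthonormalBasis

variable {ι 𝕜 E : Type*} [Fintype ι] [RCLike 𝕜] [NormedAddCommGroup E] [InnerProductSpace 𝕜 E]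
  (b : OrthonormalBasis ι 𝕜 E) {T : E →ₗ[𝕜] E} {μ : ι → 𝕜}

theorem inner_apply_of_apply_eq_smul (hT : ∀ i, T (b i) = μ i • b i) (i : ι) (x : E) :
    ⟪b i, T x⟫_𝕜 = μ i * ⟪b i, x⟫_𝕜 := by
  have hTx : T x = ∑ j, (μ j * ⟪b j, x⟫_𝕜) • b j := by
    conv_lhs => rw [← b.sum_repr' x]
    simp only [map_sum, map_smul, hT, smul_smul, mul_comm]
  rw [hTx, b.orthonormal.inner_right_fintype]

theorem norm_sq_apply_of_apply_eq_smul (hT : ∀ i, T (b i) = μ i • b i) (x : E) :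
    ‖T x‖ ^ 2 = ∑ i, ‖μ i‖ ^ 2 * ‖⟪b i, x⟫_𝕜‖ ^ 2 := by
  simp only [← b.sum_sq_norm_inner_right (T x), b.inner_apply_of_apply_eq_smul hT, norm_mul,
    mul_pow]

theorem sq_mul_norm_sq_sub_le_norm_sq_apply [DecidableEq ι] (hT : ∀ i, T (b i) = μ i • b i)
    {i₀ : ι} {c : ℝ} (hc : 0 ≤ c) (hμ : ∀ i ≠ i₀, c ≤ ‖μ i‖) (x : E) :
    c ^ 2 * (‖x‖ ^ 2 - ‖⟪b i₀, x⟫_𝕜‖ ^ 2) ≤ ‖T x‖ ^ 2 := by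
  rw [b.norm_sq_apply_of_apply_eq_smul hT, ← b.sum_sq_norm_inner_right x,
    ← Finset.add_sum_erase _ _ (Finset.mem_univ i₀), add_sub_cancel_left, Finset.mul_sum]
  refine (Finset.sum_le_sum fun i hi => ?_).trans
    (Finset.sum_le_sum_of_subset_of_nonneg (Finset.erase_subset i₀ _) fun _ _ _ => by positivity)
  have := hμ i (Finset.ne_of_mem_erase hi)
  gcongr

end OrthonormalBasis

section
variable {𝕜 E : Type*} [RCLike 𝕜] [NormedAddCommGroup E] [InnerProductSpace 𝕜 E] {e : E}

theorem inner_eq_conj_mul_add_inner_sub_smul (he : ‖e‖ = 1) (x y : E) :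
    ⟪x, y⟫_𝕜 = conj ⟪e, x⟫_𝕜 * ⟪e, y⟫_𝕜 + ⟪x - ⟪e, x⟫_𝕜 • e, y - ⟪e, y⟫_𝕜 • e⟫_𝕜 := by
  simp only [inner_sub_left, inner_sub_right, inner_smul_left, inner_smul_right,
    inner_self_eq_one_of_norm_eq_one he]
  rw [← inner_conj_symm x e]
  ring

theorem norm_sq_eq_norm_inner_sq_add_norm_sub_smul_sq (he : ‖e‖ = 1) (x : E) :
    ‖x‖ ^ 2 = ‖⟪e, x⟫_𝕜‖ ^ 2 + ‖x - ⟪e, x⟫_𝕜 • e‖ ^ 2 := by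
  have horth : ⟪⟪e, x⟫_𝕜 • e, x - ⟪e, x⟫_𝕜 • e⟫_𝕜 = 0 := by
    rw [inner_smul_left, inner_sub_right, inner_smul_right, inner_self_eq_one_of_norm_eq_one he,
      mul_one, sub_self, mul_zero]
  conv_lhs => rw [← add_sub_cancel (⟪e, x⟫_𝕜 • e) x]
  simp only [sq]
  rw [norm_add_sq_eq_norm_sq_add_norm_sq_of_inner_eq_zero _ _ horth, norm_smul, he, mul_one]

theorem norm_inner_sq_mul_norm_sq_le_of_inner_eq_zero {ψ f : E} (he : ‖e‖ = 1)
    (hψf : ⟪ψ, f⟫_𝕜 = 0) :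
    ‖⟪ψ, e⟫_𝕜‖ ^ 2 * ‖f‖ ^ 2 ≤ ‖ψ‖ ^ 2 * (‖f‖ ^ 2 - ‖⟪e, f⟫_𝕜‖ ^ 2) := by
  have hψ := norm_sq_eq_norm_inner_sq_add_norm_sub_smul_sq (𝕜 := 𝕜) he ψ
  have hf := norm_sq_eq_norm_inner_sq_add_norm_sub_smul_sq (𝕜 := 𝕜) he f
  have hcoeff : ‖⟪e, ψ⟫_𝕜‖ * ‖⟪e, f⟫_𝕜‖ ≤ ‖ψ - ⟪e, ψ⟫_𝕜 • e‖ * ‖f - ⟪e, f⟫_𝕜 • e‖ := by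
    have h := inner_eq_conj_mul_add_inner_sub_smul (𝕜 := 𝕜) he ψ f
    rw [hψf, eq_comm, add_eq_zero_iff_eq_neg] at h
    calc ‖⟪e, ψ⟫_𝕜‖ * ‖⟪e, f⟫_𝕜‖ = ‖conj ⟪e, ψ⟫_𝕜 * ⟪e, f⟫_𝕜‖ := by
          rw [norm_mul, RCLike.norm_conj]
      _ = ‖⟪ψ - ⟪e, ψ⟫_𝕜 • e, f - ⟪e, f⟫_𝕜 • e⟫_𝕜‖ := by rw [h, norm_neg]
      _ ≤ _ := norm_inner_le_norm _ _
  rw [norm_inner_symm, hψ, hf, add_sub_cancel_left]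
  nlinarith [mul_le_mul hcoeff hcoeff (by positivity) (by positivity)]
end

theorem stmt0_general {H : Type*} [NormedAddCommGroup H] [InnerProductSpace ℂ H]
    {n : ℕ} (T : H →L[ℂ] H)
    (φ : Fin (n + 2) → H) (hON : Orthonormal ℂ φ)
    (hbasis : ∀ f : H, f ∈ Submodule.span ℂ (Set.range φ))
    (lam : Fin (n + 2) → ℝ)
    (heig : ∀ k, T (φ k) = (lam k : ℂ) • φ k)
    (h0 : lam 0 = 0) (hmono : Monotone lam)
    (ψ : H)
    (f : H) (hf : ⟪ψ, f⟫_ℂ = 0) :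
    lam 1 ^ 2 * ‖⟪ψ, φ 0⟫_ℂ‖ ^ 2 / ‖ψ‖ ^ 2 * ‖f‖ ^ 2 ≤ ‖T f‖ ^ 2 := by
  classical
  let b := OrthonormalBasis.mk hON fun x _ => hbasis x
  have hb : ⇑b = φ := OrthonormalBasis.coe_mk _ _
  have hlam1 : 0 ≤ lam 1 := h0 ▸ hmono (Fin.zero_le 1)
  have gap : lam 1 ^ 2 * (‖f‖ ^ 2 - ‖⟪φ 0, f⟫_ℂ‖ ^ 2) ≤ ‖T f‖ ^ 2 := by
    have hgap : ∀ k ≠ 0, lam 1 ≤ ‖(lam k : ℂ)‖ := fun k hk => by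
      rw [Complex.norm_real, Real.norm_eq_abs]
      exact le_abs.mpr (Or.inl (hmono (Fin.one_le_of_ne_zero hk)))
    have heig' : ∀ k, (T : H →ₗ[ℂ] H) (b k) = (lam k : ℂ) • b k := by
      simpa only [hb, ContinuousLinearMap.coe_coe] using heig
    simpa only [hb, ContinuousLinearMap.coe_coe] using
      b.sq_mul_norm_sq_sub_le_norm_sq_apply heig' hlam1 hgap f
  have geom := norm_inner_sq_mul_norm_sq_le_of_inner_eq_zero (hON.1 0) hf
  rw [div_mul_eq_mul_div]
  refine div_le_of_le_mul₀ (by positivity) (by positivity) ?_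
  calc lam 1 ^ 2 * ‖⟪ψ, φ 0⟫_ℂ‖ ^ 2 * ‖f‖ ^ 2
      ≤ lam 1 ^ 2 * (‖ψ‖ ^ 2 * (‖f‖ ^ 2 - ‖⟪φ 0, f⟫_ℂ‖ ^ 2)) := by rw [mul_assoc]; gcongr
    _ = ‖ψ‖ ^ 2 * (lam 1 ^ 2 * (‖f‖ ^ 2 - ‖⟪φ 0, f⟫_ℂ‖ ^ 2)) := by ring
    _ ≤ ‖T f‖ ^ 2 * ‖ψ‖ ^ 2 := by rw [mul_comm _ (‖ψ‖ ^ 2)]; gcongr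

/-- Lemma 7.1 (Appendix): if `T` is a non-negative self-adjoint bounded operator with
orthonormal eigenbasis `φ`, eigenvalues `0 = λ₀ < λ₁ ≤ λ₂ ≤ ...`, and `ψ ≠ 0`, then for every
`f ⟂ ψ` one has `λ₁² |⟨ψ, φ₀⟩|² / ‖ψ‖² · ‖f‖² ≤ ‖T f‖²`. -/
theorem stmt0 {H : Type*} [NormedAddCommGroup H] [InnerProductSpace ℂ H]
    {n : ℕ} (T : H →L[ℂ] H)
    (hsa : ∀ x y : H, ⟪T x, y⟫_ℂ = ⟪x, T y⟫_ℂ)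
    (hnn : ∀ x : H, 0 ≤ (⟪T x, x⟫_ℂ).re)
    (φ : Fin (n + 2) → H) (hON : Orthonormal ℂ φ)
    (hbasis : ∀ f : H, f ∈ Submodule.span ℂ (Set.range φ))
    (lam : Fin (n + 2) → ℝ)
    (heig : ∀ k, T (φ k) = (lam k : ℂ) • φ k)
    (h0 : lam 0 = 0) (h1 : 0 < lam 1) (hmono : Monotone lam)
    (ψ : H) (hψ : ψ ≠ 0)
    (f : H) (hf : ⟪ψ, f⟫_ℂ = 0) :
    lam 1 ^ 2 * ‖⟪ψ, φ 0⟫_ℂ‖ ^ 2 / ‖ψ‖ ^ 2 * ‖f‖ ^ 2 ≤ ‖T f‖ ^ 2 :=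
  stmt0_general T φ hON hbasis lam heig h0 hmono ψ f hf
end

section
/- Under the hypotheses of the graph Poincaré inequality (finite connected weighted graph G, ψ ∈ ℓ²(G) with Ψ(φ₀) = ⟨ψ, φ₀⟩ ≠ 0), for every f ∈ ℓ²(G): ‖f − (Ψ(f)/Ψ(φ₀)) φ₀‖² ≤ (‖ψ‖² / (λ₁ |Ψ(φ₀)|²)) · ‖∇f‖². -/
open Finset

/-- Weighted gradient norm squared: `‖∇f‖² = (1/2) Σ_{u,v} |f(u)−f(v)|² w(u,v)`. -/
noncomputable def gradSq {V : Type*} [Fintype V] (w : V → V → ℝ) (f : V → ℂ) : ℝ :=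
  (1 / 2) * ∑ u, ∑ v, ‖f u - f v‖ ^ 2 * w u v

/-- Weighted graph Laplacian: `(Lf)(v) = Σ_u (f(v) − f(u)) w(v,u)`. -/
noncomputable def lap {V : Type*} [Fintype V] (w : V → V → ℝ) (f : V → ℂ) : V → ℂ :=
  fun v => ∑ u, (f v - f u) * ((w v u : ℝ) : ℂ)

/-- Inner product on `ℓ²(G)`. -/
noncomputable def ip {V : Type*} [Fintype V] (ψ f : V → ℂ) : ℂ :=
  ∑ v, (starRingEnd ℂ) (ψ v) * f v

/-- Squared `ℓ²(G)` norm. -/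
noncomputable def nsq {V : Type*} [Fintype V] (f : V → ℂ) : ℝ :=
  ∑ v, ‖f v‖ ^ 2

/-- The graph with weight `w` is connected. -/
def GraphConnected {V : Type*} [Fintype V] (w : V → V → ℝ) : Prop :=
  ∀ u v : V, Relation.ReflTransGen (fun a b => 0 < w a b) u v

/-- `lam1` is the first (smallest) nonzero eigenvalue of the Laplacian of `(V, w)`. -/
def IsFirstNonzeroEig {V : Type*} [Fintype V] (w : V → V → ℝ) (lam1 : ℝ) : Prop :=
  0 < lam1 ∧
  (∃ φ : V → ℂ, φ ≠ 0 ∧ lap w φ = fun v => (lam1 : ℂ) * φ v) ∧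
  ∀ (μ : ℝ) (φ : V → ℂ), φ ≠ 0 → (lap w φ = fun v => (μ : ℂ) * φ v) → μ = 0 ∨ lam1 ≤ μ

/-!
Write `g = f - (Ψ(f)/Ψ(φ₀)) φ₀` and `h = f - ⟨φ₀, f⟩ φ₀ = g - ⟨φ₀, g⟩ φ₀`. Since `Ψ(g) = 0`,
`⟨φ₀, g⟩ Ψ(φ₀) = -⟨ψ, h⟩ = -⟨ψ - ⟨φ₀, ψ⟩ φ₀, h⟩`, so Cauchy–Schwarz and Pythagoras give
`‖g‖² |Ψ(φ₀)|² ≤ ‖ψ‖² ‖h‖²`. The spectral gap gives `λ₁ ‖h‖² ≤ ⟨h, L h⟩ = ‖∇f‖²`: in an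
eigenbasis of the symmetric operator `L`, eigenvectors for the eigenvalue `0` are constant by
connectedness, hence orthogonal to `h`, and all other eigenvalues are at least `λ₁`.
-/

open scoped InnerProductSpace

section
variable {𝕜 E : Type*} [RCLike 𝕜] [NormedAddCommGroup E] [InnerProductSpace 𝕜 E]

open RCLike

theorem LinearMap.IsSymmetric.mul_norm_sq_le_re_inner_apply_self [FiniteDimensional 𝕜 E]
    {T : E →ₗ[𝕜] E} (hT : T.IsSymmetric) {c : ℝ} {x : E}
    (h : ∀ (μ : ℝ) (v : E), v ≠ 0 → T v = (μ : 𝕜) • v → c ≤ μ ∨ ⟪v, x⟫_𝕜 = 0) :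
    c * ‖x‖ ^ 2 ≤ re ⟪x, T x⟫_𝕜 := by
  set b := hT.eigenvectorBasis rfl
  set μ := hT.eigenvalues rfl
  have hTb : ∀ i, T (b i) = (μ i : 𝕜) • b i := hT.apply_eigenvectorBasis rfl
  have hexp : re ⟪x, T x⟫_𝕜 = ∑ i, μ i * ‖⟪b i, x⟫_𝕜‖ ^ 2 := by
    rw [← b.sum_inner_mul_inner, map_sum]
    refine sum_congr rfl fun i _ => ?_
    rw [← hT, hTb, inner_smul_left, conj_ofReal, ← inner_conj_symm x, mul_left_comm,
      RCLike.conj_mul, ← ofReal_pow, ← ofReal_mul, ofReal_re]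
  rw [hexp, ← b.sum_sq_norm_inner_right, mul_sum]
  refine sum_le_sum fun i _ => ?_
  rcases h (μ i) (b i) (b.orthonormal.ne_zero i) (hTb i) with hμ | hbx
  · exact mul_le_mul_of_nonneg_right hμ (sq_nonneg _)
  · simp [hbx]

theorem inner_sub_inner_smul_self_of_norm_eq_one {e : E} (he : ‖e‖ = 1) (x : E) :
    ⟪e, x - ⟪e, x⟫_𝕜 • e⟫_𝕜 = 0 := by
  rw [inner_sub_right, inner_smul_right, inner_self_eq_norm_sq_to_K, he]
  simp

theorem norm_sq_eq_norm_sub_inner_smul_sq_add_of_norm_eq_one {e : E} (he : ‖e‖ = 1) (x : E) :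
    ‖x‖ ^ 2 = ‖x - ⟪e, x⟫_𝕜 • e‖ ^ 2 + ‖⟪e, x⟫_𝕜‖ ^ 2 := by
  have horth : ⟪x - ⟪e, x⟫_𝕜 • e, ⟪e, x⟫_𝕜 • e⟫_𝕜 = 0 := by
    rw [inner_smul_right, ← inner_conj_symm (x - _), inner_sub_inner_smul_self_of_norm_eq_one he,
      map_zero, mul_zero]
  have := norm_add_sq_eq_norm_sq_add_norm_sq_of_inner_eq_zero _ _ horth
  rw [sub_add_cancel, norm_smul, he, mul_one] at this
  simpa only [sq] using this

theorem norm_sq_mul_norm_inner_sq_le_of_inner_eq_zero {e ψ g : E} (he : ‖e‖ = 1)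
    (hg : ⟪ψ, g⟫_𝕜 = 0) :
    ‖g‖ ^ 2 * ‖⟪ψ, e⟫_𝕜‖ ^ 2 ≤ ‖ψ‖ ^ 2 * ‖g - ⟪e, g⟫_𝕜 • e‖ ^ 2 := by
  set a := ⟪e, g⟫_𝕜
  set h := g - a • e
  set p := ψ - ⟪e, ψ⟫_𝕜 • e
  have hψh : ⟪ψ, h⟫_𝕜 = -(a * ⟪ψ, e⟫_𝕜) := by
    rw [inner_sub_right, inner_smul_right, hg, zero_sub]
  have hph : ⟪p, h⟫_𝕜 = ⟪ψ, h⟫_𝕜 := by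
    rw [inner_sub_left, inner_smul_left, inner_sub_inner_smul_self_of_norm_eq_one he, mul_zero,
      sub_zero]
  have hψe : ‖⟪e, ψ⟫_𝕜‖ = ‖⟪ψ, e⟫_𝕜‖ := norm_inner_symm (𝕜 := 𝕜) e ψ
  have hcs : ‖a‖ * ‖⟪ψ, e⟫_𝕜‖ ≤ ‖p‖ * ‖h‖ := by
    rw [← norm_mul, ← norm_neg, ← hψh, ← hph]
    exact norm_inner_le_norm p h
  have hg2 := norm_sq_eq_norm_sub_inner_smul_sq_add_of_norm_eq_one (𝕜 := 𝕜) he g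
  have hψ2 := norm_sq_eq_norm_sub_inner_smul_sq_add_of_norm_eq_one (𝕜 := 𝕜) he ψ
  rw [hψe] at hψ2
  rw [hg2, hψ2]
  nlinarith [mul_self_le_mul_self (by positivity) hcs]

theorem norm_sub_div_smul_sq_mul_le {e ψ : E} (he : ‖e‖ = 1) (hψe : ⟪ψ, e⟫_𝕜 ≠ 0) (f : E) :
    ‖f - (⟪ψ, f⟫_𝕜 / ⟪ψ, e⟫_𝕜) • e‖ ^ 2 * ‖⟪ψ, e⟫_𝕜‖ ^ 2 ≤ ‖ψ‖ ^ 2 * ‖f - ⟪e, f⟫_𝕜 • e‖ ^ 2 := by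
  set c := ⟪ψ, f⟫_𝕜 / ⟪ψ, e⟫_𝕜
  have hg : ⟪ψ, f - c • e⟫_𝕜 = 0 := by
    rw [inner_sub_right, inner_smul_right, div_mul_cancel₀ _ hψe, sub_self]
  have hproj : f - c • e - ⟪e, f - c • e⟫_𝕜 • e = f - ⟪e, f⟫_𝕜 • e := by
    rw [inner_sub_right, inner_smul_right, inner_self_eq_norm_sq_to_K, he]
    module
  simpa only [hproj] using norm_sq_mul_norm_inner_sq_le_of_inner_eq_zero he hg

end

noncomputable def normalizedConst (V : Type*) [Fintype V] : EuclideanSpace ℂ V :=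
  WithLp.toLp 2 fun _ => ((1 / Real.sqrt (Fintype.card V) : ℝ) : ℂ)

section
variable {V : Type*} [Fintype V]

theorem ip_eq_inner (x y : V → ℂ) : ip x y = ⟪WithLp.toLp 2 x, WithLp.toLp 2 y⟫_ℂ := by
  simp only [ip, PiLp.inner_apply, RCLike.inner_apply, mul_comm]

theorem nsq_eq_norm_sq (x : V → ℂ) : nsq x = ‖WithLp.toLp 2 x‖ ^ 2 := by
  rw [EuclideanSpace.norm_sq_eq]; rfl

theorem inner_toLp_const_left (c : ℂ) (x : EuclideanSpace ℂ V) :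
    ⟪WithLp.toLp 2 (fun _ => c), x⟫_ℂ = (starRingEnd ℂ) c * ∑ v, x v := by
  rw [PiLp.inner_apply, mul_sum]
  exact sum_congr rfl fun v _ => by rw [RCLike.inner_apply, mul_comm]

theorem gradSq_sub_const (w : V → V → ℝ) (f : V → ℂ) (c : ℂ) :
    gradSq w (fun v => f v - c) = gradSq w f := by
  simp only [gradSq, sub_sub_sub_cancel_right]

theorem ip_lap_self {w : V → V → ℝ} (hsymm : ∀ u v, w u v = w v u) (f : V → ℂ) :
    ip f (lap w f) = gradSq w f := by
  have hswap : ip f (lap w f) = ∑ v, ∑ u, starRingEnd ℂ (f u) * ((f u - f v) * w v u) := by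
    simp only [ip, lap, mul_sum]
    rw [sum_comm]
    simp only [hsymm]
  have hdouble : ip f (lap w f) + ip f (lap w f) = ((2 * gradSq w f : ℝ) : ℂ) := by
    nth_rw 2 [hswap]
    simp only [ip, lap, gradSq, mul_sum, ← sum_add_distrib]
    push_cast
    refine sum_congr rfl fun v _ => sum_congr rfl fun u _ => ?_
    rw [← Complex.conj_mul', map_sub]
    ring
  push_cast at hdouble
  linear_combination hdouble / 2

theorem eq_of_gradSq_eq_zero {w : V → V → ℝ} (hnn : ∀ u v, 0 ≤ w u v)
    (hconn : GraphConnected w) {f : V → ℂ} (hf : gradSq w f = 0) (u v : V) : f u = f v := by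
  have hedge : ∀ a b, 0 < w a b → f a = f b := by
    intro a b hab
    have hterm : ∀ x y, 0 ≤ ‖f x - f y‖ ^ 2 * w x y := fun x y =>
      mul_nonneg (sq_nonneg _) (hnn x y)
    have hrow : ∑ b, ‖f a - f b‖ ^ 2 * w a b = 0 := by
      refine (sum_eq_zero_iff_of_nonneg fun x _ => sum_nonneg fun y _ => hterm x y).mp ?_ a
        (mem_univ a)
      simpa [gradSq] using hf
    have := (sum_eq_zero_iff_of_nonneg fun b _ => hterm a b).mp hrow b (mem_univ b)
    simpa [hab.ne', sub_eq_zero] using this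
  induction hconn u v with
  | refl => rfl
  | tail _ hab ih => exact ih.trans (hedge _ _ hab)

noncomputable def lapLinearMap (w : V → V → ℝ) :
    EuclideanSpace ℂ V →ₗ[ℂ] EuclideanSpace ℂ V where
  toFun x := WithLp.toLp 2 (lap w x)
  map_add' x y := by
    ext v
    simp only [lap, PiLp.add_apply, ← sum_add_distrib]
    exact sum_congr rfl fun u _ => by ring
  map_smul' c x := by
    ext v
    simp only [lap, PiLp.smul_apply, smul_eq_mul, RingHom.id_apply, mul_sum]
    exact sum_congr rfl fun u _ => by ring

theorem inner_lapLinearMap_self {w : V → V → ℝ} (hsymm : ∀ u v, w u v = w v u)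
    (x : EuclideanSpace ℂ V) : ⟪x, lapLinearMap w x⟫_ℂ = gradSq w x := by
  rw [← ip_lap_self hsymm, ip_eq_inner]
  rfl

theorem isSymmetric_lapLinearMap {w : V → V → ℝ} (hsymm : ∀ u v, w u v = w v u) :
    (lapLinearMap w).IsSymmetric := by
  refine (LinearMap.isSymmetric_iff_inner_map_self_real _).mpr fun x => ?_
  rw [← inner_conj_symm, inner_lapLinearMap_self hsymm, Complex.conj_ofReal, Complex.conj_ofReal]

theorem mul_norm_sq_le_gradSq_of_sum_eq_zero {w : V → V → ℝ} (hsymm : ∀ u v, w u v = w v u)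
    (hnn : ∀ u v, 0 ≤ w u v) (hconn : GraphConnected w) {lam1 : ℝ}
    (hlam : IsFirstNonzeroEig w lam1) {x : EuclideanSpace ℂ V} (hx : ∑ v, x v = 0) :
    lam1 * ‖x‖ ^ 2 ≤ gradSq w x := by
  have hre : RCLike.re ⟪x, lapLinearMap w x⟫_ℂ = gradSq w x := by
    rw [inner_lapLinearMap_self hsymm]
    exact Complex.ofReal_re _
  rw [← hre]
  refine (isSymmetric_lapLinearMap hsymm).mul_norm_sq_le_re_inner_apply_self fun μ v hv hμv => ?_
  have heig : lap w v = fun u => (μ : ℂ) * v u := congrArg WithLp.ofLp hμv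
  have hv' : (v : V → ℂ) ≠ 0 := fun h => hv (WithLp.ofLp_injective 2 h)
  rcases hlam.2.2 μ v hv' heig with rfl | hμ
  · right
    have hgrad : gradSq w v = 0 := by
      simpa [hμv] using (inner_lapLinearMap_self hsymm v).symm
    obtain ⟨u₀, -⟩ := Function.ne_iff.mp hv'
    have hconst : v = WithLp.toLp 2 (fun _ => v u₀) := by
      ext u
      exact eq_of_gradSq_eq_zero hnn hconn hgrad u u₀
    rw [hconst, inner_toLp_const_left, hx, mul_zero]
  · exact Or.inl hμ

theorem norm_normalizedConst [Nonempty V] : ‖normalizedConst V‖ = 1 := by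
  have hcard : (0 : ℝ) < Fintype.card V := by exact_mod_cast Fintype.card_pos
  rw [normalizedConst, EuclideanSpace.norm_eq]
  simp only [Complex.norm_real, Real.norm_eq_abs, sq_abs, sum_const, card_univ, nsmul_eq_mul]
  rw [div_pow, one_pow, Real.sq_sqrt hcard.le, mul_one_div_cancel hcard.ne', Real.sqrt_one]

theorem mul_norm_sub_inner_smul_sq_le_gradSq [Nonempty V] {w : V → V → ℝ}
    (hsymm : ∀ u v, w u v = w v u) (hnn : ∀ u v, 0 ≤ w u v) (hconn : GraphConnected w)
    {lam1 : ℝ} (hlam : IsFirstNonzeroEig w lam1) (f : V → ℂ) :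
    lam1 * ‖WithLp.toLp 2 f - ⟪normalizedConst V, WithLp.toLp 2 f⟫_ℂ • normalizedConst V‖ ^ 2
      ≤ gradSq w f := by
  set r : ℝ := 1 / Real.sqrt (Fintype.card V)
  set h := WithLp.toLp 2 f - ⟪normalizedConst V, WithLp.toLp 2 f⟫_ℂ • normalizedConst V
  have hsum : ∑ v, h v = 0 := by
    have horth : ⟪normalizedConst V, h⟫_ℂ = 0 :=
      inner_sub_inner_smul_self_of_norm_eq_one norm_normalizedConst _
    have hr : (starRingEnd ℂ) (r : ℂ) ≠ 0 := by
      rw [Complex.conj_ofReal, Complex.ofReal_ne_zero]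
      exact one_div_ne_zero (Real.sqrt_ne_zero'.mpr (by exact_mod_cast Fintype.card_pos))
    rw [normalizedConst, inner_toLp_const_left] at horth
    exact (mul_eq_zero.mp horth).resolve_left hr
  have hgrad : gradSq w h = gradSq w f :=
    gradSq_sub_const w f (⟪normalizedConst V, WithLp.toLp 2 f⟫_ℂ * r)
  exact hgrad ▸ mul_norm_sq_le_gradSq_of_sum_eq_zero hsymm hnn hconn hlam hsum

end

theorem stmt3_general {V : Type*} [Fintype V] (w : V → V → ℝ)
    (hsymm : ∀ u v, w u v = w v u) (hnn : ∀ u v, 0 ≤ w u v)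
    (hconn : GraphConnected w)
    (lam1 : ℝ) (hlam : IsFirstNonzeroEig w lam1)
    (φ0 : V → ℂ) (hφ0 : φ0 = fun _ => ((1 / Real.sqrt (Fintype.card V) : ℝ) : ℂ))
    (ψ : V → ℂ) (hnz : ip ψ φ0 ≠ 0)
    (f : V → ℂ) :
    nsq (fun v => f v - (ip ψ f / ip ψ φ0) * φ0 v) ≤
      nsq ψ / (lam1 * ‖ip ψ φ0‖ ^ 2) * gradSq w f := by
  have : Nonempty V := by
    by_contra hV
    exact hnz (by simp [ip, not_nonempty_iff.mp hV])
  set F := WithLp.toLp 2 f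
  set Ψ := WithLp.toLp 2 ψ
  set e := normalizedConst V
  have hφ : WithLp.toLp 2 φ0 = e := by rw [hφ0]; rfl
  have hΨe : ⟪Ψ, e⟫_ℂ ≠ 0 := by rwa [← hφ, ← ip_eq_inner]
  have hK : 0 < ‖⟪Ψ, e⟫_ℂ‖ ^ 2 := by positivity
  have hproj := norm_sub_div_smul_sq_mul_le norm_normalizedConst hΨe F
  have hgap := mul_norm_sub_inner_smul_sq_le_gradSq hsymm hnn hconn hlam f
  have hg : nsq (fun v => f v - (ip ψ f / ip ψ φ0) * φ0 v)
      = ‖F - (ip ψ f / ip ψ φ0) • WithLp.toLp 2 φ0‖ ^ 2 := nsq_eq_norm_sq _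
  rw [hg, nsq_eq_norm_sq, ip_eq_inner, ip_eq_inner, hφ, div_mul_eq_mul_div,
    le_div_iff₀ (mul_pos hlam.1 hK)]
  nlinarith [mul_le_mul_of_nonneg_left hproj hlam.1.le,
    mul_le_mul_of_nonneg_left hgap (sq_nonneg ‖Ψ‖)]

/-- Corollary 3.2: if `Ψ(φ₀) = ⟨ψ, φ₀⟩ ≠ 0` then for every `f ∈ ℓ²(G)`,
`‖f − (Ψ(f)/Ψ(φ₀))φ₀‖² ≤ (‖ψ‖²/(λ₁|Ψ(φ₀)|²))‖∇f‖²`. -/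
theorem stmt3 {V : Type*} [Fintype V] (w : V → V → ℝ)
    (hsymm : ∀ u v, w u v = w v u) (hnn : ∀ u v, 0 ≤ w u v) (hdiag : ∀ v, w v v = 0)
    (hconn : GraphConnected w) (hcard : 1 < Fintype.card V)
    (lam1 : ℝ) (hlam : IsFirstNonzeroEig w lam1)
    (φ0 : V → ℂ) (hφ0 : φ0 = fun _ => ((1 / Real.sqrt (Fintype.card V) : ℝ) : ℂ))
    (ψ : V → ℂ) (hnz : ip ψ φ0 ≠ 0)
    (f : V → ℂ) :
    nsq (fun v => f v - (ip ψ f / ip ψ φ0) * φ0 v) ≤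
      nsq ψ / (lam1 * ‖ip ψ φ0‖ ^ 2) * gradSq w f :=
  stmt3_general w hsymm hnn hconn lam1 hlam φ0 hφ0 ψ hnz f
end

section
/- Under the same hypotheses (ℓ¹ approximation inequality with constant 0 < γ < 1/2 on a subspace E), for every f ∈ E: (γ/(1−γ)) Σ_j (⟨ζ_j, f⟩ − |⟨ζ_j, f⟩|) |S_j| ≤ Σ_{v∈V} f(v) − ((1−2γ)/(1−γ)) Σ_j ⟨ζ_j, f⟩ |S_j|. -/
/-!
Write `c_j = ⟨ζ_j, f⟩` and `T = Σ_j Σ_{v ∈ S_j} |f v - c_j| ≤ γ Σ_v |f v|`. Summing over the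
partition, `Σ_v f v - Σ_j c_j |S_j|` is a sum of the terms `f v - c_j`, so it is at least `-T`;
and the triangle inequality gives `Σ_v |f v| ≤ T + Σ_j |c_j| |S_j|`, whence
`(1 - γ) Σ_v |f v| ≤ Σ_j |c_j| |S_j|`. Combining the two bounds, `(1 - γ)(Σ_v f v - Σ_j c_j |S_j|)`
is at least `-γ Σ_j |c_j| |S_j|`, which rearranges to the claim.
-/

open Finset

namespace Finset

variable {V J : Type*} [Fintype V] [Fintype J] {S : J → Finset V}

theorem sum_eq_sum_sum_of_partition {β : Type*} [AddCommMonoid β]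
    (hdisj : ∀ i j, i ≠ j → Disjoint (S i) (S j)) (hcover : ∀ v, ∃ j, v ∈ S j) (g : V → β) :
    ∑ v, g v = ∑ j, ∑ v ∈ S j, g v := by
  classical
  have huniv : (univ : Finset V) = univ.biUnion S := by
    ext v
    simpa using hcover v
  rw [huniv, sum_biUnion fun i _ j _ hij => hdisj i j hij]

variable (hdisj : ∀ i j, i ≠ j → Disjoint (S i) (S j)) (hcover : ∀ v, ∃ j, v ∈ S j)
include hdisj hcover

theorem sum_sub_sum_mul_card_eq (f : V → ℝ) (c : J → ℝ) :
    ∑ v, f v - ∑ j, c j * ((S j).card : ℝ) = ∑ j, ∑ v ∈ S j, (f v - c j) := by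
  rw [sum_eq_sum_sum_of_partition hdisj hcover, ← sum_sub_distrib]
  refine sum_congr rfl fun j _ => ?_
  rw [sum_sub_distrib, sum_const, nsmul_eq_mul, mul_comm]

theorem neg_sum_abs_sub_le_sum_sub_sum_mul_card (f : V → ℝ) (c : J → ℝ) :
    -∑ j, ∑ v ∈ S j, |f v - c j| ≤ ∑ v, f v - ∑ j, c j * ((S j).card : ℝ) := by
  rw [sum_sub_sum_mul_card_eq hdisj hcover, neg_le]
  calc -∑ j, ∑ v ∈ S j, (f v - c j) ≤ |∑ j, ∑ v ∈ S j, (f v - c j)| := neg_le_abs _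
    _ ≤ ∑ j, ∑ v ∈ S j, |f v - c j| :=
      (abs_sum_le_sum_abs _ _).trans (sum_le_sum fun j _ => abs_sum_le_sum_abs _ _)

theorem sum_abs_le_sum_abs_sub_add_sum_abs_mul_card (f : V → ℝ) (c : J → ℝ) :
    ∑ v, |f v| ≤ ∑ j, ∑ v ∈ S j, |f v - c j| + ∑ j, |c j| * ((S j).card : ℝ) := by
  rw [sum_eq_sum_sum_of_partition hdisj hcover, ← sum_add_distrib]
  refine sum_le_sum fun j _ => ?_
  calc ∑ v ∈ S j, |f v| ≤ ∑ v ∈ S j, (|f v - c j| + |c j|) :=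
        sum_le_sum fun v _ => sub_le_iff_le_add.mp (abs_sub_abs_le_abs_sub (f v) (c j))
    _ = ∑ v ∈ S j, |f v - c j| + |c j| * ((S j).card : ℝ) := by
        rw [sum_add_distrib, sum_const, nsmul_eq_mul, mul_comm]

theorem div_mul_sum_sub_abs_mul_card_le_of_sum_abs_sub_le
    {γ : ℝ} (hγ0 : 0 ≤ γ) (hγ1 : γ < 1) (f : V → ℝ) (c : J → ℝ)
    (happrox : ∑ j, ∑ v ∈ S j, |f v - c j| ≤ γ * ∑ v, |f v|) :
    γ / (1 - γ) * ∑ j, (c j - |c j|) * ((S j).card : ℝ) ≤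
      ∑ v, f v - (1 - 2 * γ) / (1 - γ) * ∑ j, c j * ((S j).card : ℝ) := by
  have h1γ : 0 < 1 - γ := by linarith
  set N := ∑ v, |f v|
  set C := ∑ j, c j * ((S j).card : ℝ)
  set M := ∑ j, |c j| * ((S j).card : ℝ)
  have hlower : -(γ * N) ≤ ∑ v, f v - C :=
    (neg_le_neg happrox).trans (neg_sum_abs_sub_le_sum_sub_sum_mul_card hdisj hcover f c)
  have hN : (1 - γ) * N ≤ M := by
    linarith [sum_abs_le_sum_abs_sub_add_sum_abs_mul_card hdisj hcover f c]
  have hsplit : ∑ j, (c j - |c j|) * ((S j).card : ℝ) = C - M := by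
    rw [← sum_sub_distrib]
    exact sum_congr rfl fun j _ => sub_mul _ _ _
  have key : γ * (C - M) ≤ (1 - γ) * ∑ v, f v - (1 - 2 * γ) * C := by
    linarith [mul_le_mul_of_nonneg_left hlower h1γ.le, mul_le_mul_of_nonneg_left hN hγ0]
  rw [hsplit, div_mul_eq_mul_div, div_mul_eq_mul_div, div_le_iff₀ h1γ, sub_mul,
    div_mul_cancel₀ _ h1γ.ne']
  linarith

end Finset

theorem stmt13_general {V J : Type*} [Fintype V] [Fintype J]
    (S : J → Finset V)
    (hdisj : ∀ i j, i ≠ j → Disjoint (S i) (S j))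
    (hcover : ∀ v : V, ∃ j, v ∈ S j)
    (ζ : J → V → ℝ)
    (γ : ℝ) (hγ0 : 0 < γ) (hγ : γ < 1 / 2)
    (f : V → ℝ)
    (happrox : ∑ j, ∑ v ∈ S j, |f v - ∑ u, ζ j u * f u| ≤ γ * ∑ v, |f v|) :
    (γ / (1 - γ)) * ∑ j, ((∑ u, ζ j u * f u) - |∑ u, ζ j u * f u|) * ((S j).card : ℝ) ≤
      ∑ v, f v - ((1 - 2 * γ) / (1 - γ)) * ∑ j, (∑ u, ζ j u * f u) * ((S j).card : ℝ) :=
  div_mul_sum_sub_abs_mul_card_le_of_sum_abs_sub_le hdisj hcover hγ0.le (by linarith) f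
    (fun j => ∑ u, ζ j u * f u) happrox

/-- Inequality (34): under the `ℓ¹` approximation hypothesis with `0 < γ < 1/2`,
`(γ/(1−γ)) Σ_j (⟨ζ_j,f⟩ − |⟨ζ_j,f⟩|)|S_j| ≤ Σ_v f(v) − ((1−2γ)/(1−γ)) Σ_j ⟨ζ_j,f⟩|S_j|`. -/
theorem stmt13 {V J : Type*} [Fintype V] [Fintype J]
    (S : J → Finset V)
    (hdisj : ∀ i j, i ≠ j → Disjoint (S i) (S j))
    (hcover : ∀ v : V, ∃ j, v ∈ S j)
    (ζ : J → V → ℝ) (hsupp : ∀ j, ∀ v ∉ S j, ζ j v = 0)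
    (γ : ℝ) (hγ0 : 0 < γ) (hγ : γ < 1 / 2)
    (f : V → ℝ)
    (happrox : ∑ j, ∑ v ∈ S j, |f v - ∑ u, ζ j u * f u| ≤ γ * ∑ v, |f v|) :
    (γ / (1 - γ)) * ∑ j, ((∑ u, ζ j u * f u) - |∑ u, ζ j u * f u|) * ((S j).card : ℝ) ≤
      ∑ v, f v - ((1 - 2 * γ) / (1 - γ)) * ∑ j, (∑ u, ζ j u * f u) * ((S j).card : ℝ) :=
  stmt13_general S hdisj hcover ζ γ hγ0 hγ f happrox
end

section
/- (Existence of positive cubature weights.) Let V be a finite set partitioned into {S_j}_{j∈J}, let E ⊆ ℝ^V be a linear subspace, and suppose the samples f_j = ⟨ζ_j, f⟩ are given by nonnegative functions ζ_j supported in S_j with the sampling map f ↦ (f_j) injective on E, and suppose Σ_j Σ_{v∈S_j}|f(v) − f_j| ≤ γ Σ_v|f(v)| for all f ∈ E with 0 < γ < 1/2. Then there exist weights ϖ_j with ((1−2γ)/(1−γ))|S_j| ≤ ϖ_j ≤ ((3−2γ)/(1−γ))|S_j| such that Σ_{v∈V} f(v) = Σ_j ϖ_j ⟨ζ_j, f⟩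 for all f ∈ E. -/
open Finset

/-- Theorem 6.3 (exact positive cubature formula): under the `ℓ¹` approximation hypothesis with
`0 < γ < 1/2`, nonnegative sampling functions `ζ_j` supported in `S_j`, and injective sampling
map on the subspace `E`, there exist weights `ϖ_j` with
`((1−2γ)/(1−γ))|S_j| ≤ ϖ_j ≤ ((3−2γ)/(1−γ))|S_j|` such that
`Σ_v f(v) = Σ_j ϖ_j ⟨ζ_j, f⟩` for every `f ∈ E`. -/
theorem stmt15 {V J : Type*} [Fintype V] [Fintype J]
    (S : J → Finset V)
    (hdisj : ∀ i j, i ≠ j → Disjoint (S i) (S j))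
    (hcover : ∀ v : V, ∃ j, v ∈ S j)
    (ζ : J → V → ℝ) (hζnn : ∀ j v, 0 ≤ ζ j v) (hsupp : ∀ j, ∀ v ∉ S j, ζ j v = 0)
    (γ : ℝ) (hγ0 : 0 < γ) (hγ : γ < 1 / 2)
    (E : Submodule ℝ (V → ℝ))
    (happrox : ∀ f ∈ E, ∑ j, ∑ v ∈ S j, |f v - ∑ u, ζ j u * f u| ≤ γ * ∑ v, |f v|)
    (hinj : ∀ f ∈ E, ∀ g ∈ E,
      (∀ j, (∑ u, ζ j u * f u) = ∑ u, ζ j u * g u) → f = g) :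
    ∃ ϖ : J → ℝ,
      (∀ j, ((1 - 2 * γ) / (1 - γ)) * ((S j).card : ℝ) ≤ ϖ j ∧
            ϖ j ≤ ((3 - 2 * γ) / (1 - γ)) * ((S j).card : ℝ)) ∧
      ∀ f ∈ E, ∑ v, f v = ∑ j, ϖ j * ∑ u, ζ j u * f u := by
  classical
  have h1γ : (0:ℝ) < 1 - γ := by linarith
  -- partition lemma
  have hpart : ∀ g : V → ℝ, ∑ v, g v = ∑ j, ∑ v ∈ S j, g v := by
    intro g
    have huniv : Finset.univ.biUnion S = Finset.univ := by
      apply Finset.eq_univ_iff_forall.mpr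
      intro v
      obtain ⟨j, hj⟩ := hcover v
      exact Finset.mem_biUnion.mpr ⟨j, Finset.mem_univ j, hj⟩
    rw [← huniv]
    exact Finset.sum_biUnion (fun i _ j _ hij => hdisj i j hij)
  -- sampling linear map
  let T : E →ₗ[ℝ] (J → ℝ) :=
    { toFun := fun f j => ∑ u, ζ j u * (f : V → ℝ) u
      map_add' := by
        intro f g; funext j
        simp [mul_add, Finset.sum_add_distrib]
      map_smul' := by
        intro c f; funext j
        simp only [Submodule.coe_smul, Pi.smul_apply, smul_eq_mul, RingHom.id_apply,
          Finset.mul_sum]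
        exact Finset.sum_congr rfl (fun u _ => by ring) }
  have hTinj : Function.Injective T := by
    intro f g h
    exact Subtype.ext (hinj f f.2 g g.2 (fun j => congrFun h j))
  let e : E ≃ₗ[ℝ] LinearMap.range T := LinearEquiv.ofInjective T hTinj
  let σ : E →ₗ[ℝ] ℝ :=
    { toFun := fun f => ∑ v, (f : V → ℝ) v
      map_add' := by intro f g; simp [Finset.sum_add_distrib]
      map_smul' := by intro c f; simp [Finset.mul_sum] }
  let φ : (J → ℝ) →ₗ.[ℝ] ℝ := ⟨LinearMap.range T, σ.comp e.symm.toLinearMap⟩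
  let N : (J → ℝ) → ℝ := fun α => ∑ j, (2 * α j + |α j| / (1 - γ)) * ((S j).card : ℝ)
  have N_hom : ∀ c : ℝ, 0 < c → ∀ x, N (c • x) = c * N x := by
    intro c hc x
    simp only [N, Pi.smul_apply, smul_eq_mul, Finset.mul_sum]
    refine Finset.sum_congr rfl (fun j _ => ?_)
    rw [abs_mul, abs_of_pos hc]
    ring
  have N_add : ∀ x y, N (x + y) ≤ N x + N y := by
    intro x y
    simp only [N, ← Finset.sum_add_distrib]
    refine Finset.sum_le_sum (fun j _ => ?_)
    rw [← add_mul]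
    refine mul_le_mul_of_nonneg_right ?_ (Nat.cast_nonneg _)
    have habs : |x j + y j| ≤ |x j| + |y j| := abs_add_le _ _
    have hdiv : |x j + y j| / (1 - γ) ≤ (|x j| + |y j|) / (1 - γ) := by
      gcongr
    simp only [Pi.add_apply]
    rw [add_div] at hdiv
    linarith
  -- key inequality
  have hkey : ∀ f : E, σ f ≤ N (T f) := by
    intro f
    set fj : J → ℝ := fun j => ∑ u, ζ j u * (f : V → ℝ) u with hfj
    have hA := happrox f f.2
    set A : ℝ := ∑ j, ∑ v ∈ S j, |(f : V → ℝ) v - fj j| with hAdef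
    set B : ℝ := ∑ v, |(f : V → ℝ) v| with hBdef
    set C : ℝ := ∑ j, ((S j).card : ℝ) * |fj j| with hCdef
    set D : ℝ := ∑ j, ((S j).card : ℝ) * fj j with hDdef
    have hAB : A ≤ γ * B := hA
    have hB0 : 0 ≤ B := Finset.sum_nonneg (fun v _ => abs_nonneg _)
    have hC0 : 0 ≤ C := Finset.sum_nonneg (fun j _ =>
      mul_nonneg (Nat.cast_nonneg _) (abs_nonneg _))
    have hDC : -C ≤ D := by
      have habsD : |D| ≤ C := by
        rw [hDdef, hCdef]
        refine (Finset.abs_sum_le_sum_abs _ _).trans (Finset.sum_le_sum fun j _ => ?_)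
        rw [abs_mul, Nat.abs_cast]
      linarith [neg_abs_le D]
    have hBC : B ≤ C + A := by
      rw [hBdef, hpart (fun v => |(f : V → ℝ) v|), hCdef, hAdef, ← Finset.sum_add_distrib]
      refine Finset.sum_le_sum (fun j _ => ?_)
      rw [Finset.card_eq_sum_ones (S j)]
      push_cast
      rw [Finset.sum_mul, ← Finset.sum_add_distrib]
      refine Finset.sum_le_sum (fun v _ => ?_)
      rw [one_mul]
      calc |(f : V → ℝ) v| = |fj j + ((f : V → ℝ) v - fj j)| := by ring_nf
        _ ≤ |fj j| + |(f : V → ℝ) v - fj j| := abs_add_le _ _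
    have hsum : σ f ≤ D + A := by
      have hσ : σ f = ∑ j, ∑ v ∈ S j, (f : V → ℝ) v := hpart _
      rw [hσ, hDdef, hAdef, ← Finset.sum_add_distrib]
      refine Finset.sum_le_sum (fun j _ => ?_)
      rw [Finset.card_eq_sum_ones (S j)]
      push_cast
      rw [Finset.sum_mul, ← Finset.sum_add_distrib]
      refine Finset.sum_le_sum (fun v _ => ?_)
      rw [one_mul]
      have := le_abs_self ((f : V → ℝ) v - fj j)
      linarith
    have hN : N (T f) = 2 * D + C / (1 - γ) := by
      simp only [N, hDdef, hCdef, Finset.mul_sum, Finset.sum_div, ← Finset.sum_add_distrib]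
      refine Finset.sum_congr rfl (fun j _ => ?_)
      have hTfj : (T f) j = fj j := rfl
      rw [hTfj]
      ring
    rw [hN, show 2 * D + C / (1 - γ) = (2 * D * (1 - γ) + C) / (1 - γ) by field_simp,
      le_div_iff₀ h1γ]
    nlinarith [mul_le_mul_of_nonneg_left hBC hγ0.le]
  have hdom : ∀ x : φ.domain, φ x ≤ N x := by
    intro x
    obtain ⟨f, hf⟩ := x.2
    have hx : e.symm x = f := by
      rw [LinearEquiv.symm_apply_eq]
      refine Subtype.ext ?_
      show (x : J → ℝ) = (e f : J → ℝ)
      rw [LinearEquiv.ofInjective_apply]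
      exact hf.symm
    have hφ : φ x = σ f := by
      show σ (e.symm x) = σ f
      rw [hx]
    rw [hφ, show (x : J → ℝ) = T f from hf.symm]
    exact hkey f
  obtain ⟨L, hLeq, hLle⟩ := exists_extension_of_le_sublinear φ N N_hom N_add hdom
  -- weights
  refine ⟨fun j => L (Pi.single j 1), ?_, ?_⟩
  · intro j
    have hNs : N (Pi.single j 1) = (2 + 1 / (1 - γ)) * ((S j).card : ℝ) := by
      simp only [N]
      rw [Finset.sum_eq_single j]
      · simp
      · intro k _ hk
        rw [Pi.single_eq_of_ne hk]
        simp
      · simp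
    have hNs' : N (-Pi.single j 1) = (-2 + 1 / (1 - γ)) * ((S j).card : ℝ) := by
      simp only [N]
      rw [Finset.sum_eq_single j]
      · simp
      · intro k _ hk
        simp [Pi.single_eq_of_ne hk]
      · simp
    have h1 := hLle (Pi.single j 1)
    have h2 := hLle (-Pi.single j 1)
    rw [map_neg] at h2
    rw [hNs] at h1
    rw [hNs'] at h2
    constructor
    · rw [show (1 - 2*γ) / (1 - γ) = -(-2 + 1/(1-γ)) by field_simp; ring]
      nlinarith [(Nat.cast_nonneg (S j).card : (0:ℝ) ≤ ((S j).card : ℝ))]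
    · rw [show (3 - 2*γ) / (1 - γ) = 2 + 1/(1-γ) by field_simp; ring]
      exact h1
  · intro f hfE
    have hx : (⟨T ⟨f, hfE⟩, LinearMap.mem_range_self T ⟨f, hfE⟩⟩ : φ.domain) =
        e ⟨f, hfE⟩ := by
      refine Subtype.ext ?_
      rw [LinearEquiv.ofInjective_apply]
    have hval : L (T ⟨f, hfE⟩) = ∑ v, f v := by
      have := hLeq ⟨T ⟨f, hfE⟩, LinearMap.mem_range_self T ⟨f, hfE⟩⟩
      rw [this]
      show φ _ = _
      rw [hx]
      show σ (e.symm (e ⟨f, hfE⟩)) = _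
      rw [LinearEquiv.symm_apply_apply]
      rfl
    have hdecomp : T ⟨f, hfE⟩ = ∑ j, T ⟨f, hfE⟩ j • (Pi.single j 1 : J → ℝ) := by
      funext k
      simp [Pi.single_apply]
    rw [← hval, hdecomp, map_sum]
    refine Finset.sum_congr rfl (fun j _ => ?_)
    rw [map_smul, smul_eq_mul]
    exact mul_comm _ _
end

section
/- (Bauer–Namioka extension, finite-dimensional case.) Let E = ℝⁿ with a norm, C ⊆ E a convex cone, F ⊆ E a subspace, and Θ a linear functional on F. If there exists a neighborhood U of 0 such that Θ(F ∩ (U + C)) is bounded from below, then Θ admits a continuous linear extension to E which is nonnegative on C. -/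
/-!
`Θ` is dominated by a multiple of `x ↦ infDist (-x) C`: if `x ∈ F` and `c ∈ C`, then
`-t • x = -t • (x + c) + t • c` lies in `U + C` as soon as `t ‖x + c‖` is small, so the lower
bound on `Θ` there gives `Θ x ≤ K ‖x + c‖`. The function `N x = K · infDist (-x) C` is
sublinear and vanishes on `-C`, so a Hahn–Banach extension of `Θ` dominated by `N` is
nonnegative on `C`; in finite dimension it is automatically continuous.
-/

open scoped Pointwise
open Metric

namespace ConvexCone

theorem smul_coe_eq {𝕜 E : Type*} [Field 𝕜] [LinearOrder 𝕜] [IsStrictOrderedRing 𝕜]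
    [AddCommGroup E] [Module 𝕜 E] (C : ConvexCone 𝕜 E) {c : 𝕜} (hc : 0 < c) :
    c • (C : Set E) = C :=
  (Set.smul_set_subset_iff.2 fun _ hx => C.smul_mem hc hx).antisymm fun x hx =>
    ⟨c⁻¹ • x, C.smul_mem (inv_pos.2 hc) hx, smul_inv_smul₀ hc.ne' x⟩

variable {E : Type*} [NormedAddCommGroup E] [NormedSpace ℝ E] (C : ConvexCone ℝ E)

theorem infDist_smul {c : ℝ} (hc : 0 < c) (x : E) :
    infDist (c • x) (C : Set E) = c * infDist x C := by
  conv_lhs => rw [← C.smul_coe_eq hc]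
  rw [infDist_smul₀ hc.ne', Real.norm_of_nonneg hc.le]

theorem infDist_add_le (x y : E) :
    infDist (x + y) (C : Set E) ≤ infDist x C + infDist y C := by
  rcases (C : Set E).eq_empty_or_nonempty with hC | hC
  · simp [hC]
  refine le_of_forall_pos_lt_add fun δ hδ => ?_
  obtain ⟨a, ha, hxa⟩ :=
    (infDist_lt_iff hC).1 (lt_add_of_pos_right (infDist x C) (half_pos hδ))
  obtain ⟨b, hb, hyb⟩ :=
    (infDist_lt_iff hC).1 (lt_add_of_pos_right (infDist y C) (half_pos hδ))
  calc infDist (x + y) (C : Set E) ≤ dist (x + y) (a + b) :=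
        infDist_le_dist_of_mem (C.add_mem ha hb)
    _ ≤ dist x a + dist y b := dist_add_add_le _ _ _ _
    _ < infDist x C + infDist y C + δ := by linarith

end ConvexCone

section Extension

variable {E : Type*} [NormedAddCommGroup E] [NormedSpace ℝ E] (C : ConvexCone ℝ E)
  {F : Subspace ℝ E} (Θ : F →ₗ[ℝ] ℝ)

theorem le_mul_norm_add_of_neg_le_on_ball_add_cone {ε M : ℝ} (hε : 0 < ε) (hM : 0 < M)
    (hΘ : ∀ x : F, (x : E) ∈ ball 0 ε + (C : Set E) → -M ≤ Θ x) (x : F) {c : E}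
    (hc : c ∈ C) : Θ x ≤ 2 * M / ε * ‖(x : E) + c‖ := by
  by_contra! hlt
  have hx : 0 < Θ x := lt_of_le_of_lt (by positivity) hlt
  set t := 2 * M / Θ x with ht
  have htpos : 0 < t := by positivity
  have hsmall : t * ‖(x : E) + c‖ < ε := by
    rw [ht, div_mul_eq_mul_div, div_lt_iff₀ hx]
    rw [div_mul_eq_mul_div, div_lt_iff₀ hε] at hlt
    linarith
  have hmem : ((-(t • x) : F) : E) ∈ ball 0 ε + (C : Set E) := by
    refine ⟨-(t • ((x : E) + c)), ?_, t • c, C.smul_mem htpos hc, by push_cast; module⟩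
    rwa [mem_ball_zero_iff, norm_neg, norm_smul, Real.norm_of_nonneg htpos.le]
  have hbound := hΘ _ hmem
  rw [map_neg, map_smul, smul_eq_mul, ht, div_mul_cancel₀ _ hx.ne'] at hbound
  linarith

theorem le_mul_infDist_neg_of_neg_le_on_ball_add_cone (hC : (C : Set E).Nonempty) {ε M : ℝ}
    (hε : 0 < ε) (hM : 0 < M) (hΘ : ∀ x : F, (x : E) ∈ ball 0 ε + (C : Set E) → -M ≤ Θ x)
    (x : F) : Θ x ≤ 2 * M / ε * infDist (-(x : E)) C := by
  have hK : 0 < 2 * M / ε := by positivity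
  rw [← div_le_iff₀' hK, le_infDist hC]
  intro c hc
  rw [div_le_iff₀' hK, dist_eq_norm, ← neg_add', norm_neg]
  exact le_mul_norm_add_of_neg_le_on_ball_add_cone C Θ hε hM hΘ x hc

theorem exists_extension_nonneg_of_le_mul_infDist_neg {K : ℝ} (hK : 0 ≤ K)
    (hΘ : ∀ x : F, Θ x ≤ K * infDist (-(x : E)) C) :
    ∃ g : E →ₗ[ℝ] ℝ, (∀ x : F, g x = Θ x) ∧ ∀ x ∈ C, 0 ≤ g x := by
  obtain ⟨g, hgΘ, hgN⟩ := exists_extension_of_le_sublinear ⟨F, Θ⟩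
    (fun x => K * infDist (-x) C)
    (fun c hc x => by simp only [← smul_neg, C.infDist_smul hc]; ring)
    (fun x y => by
      simp only [neg_add, ← mul_add]
      exact mul_le_mul_of_nonneg_left (C.infDist_add_le _ _) hK)
    hΘ
  refine ⟨g, hgΘ, fun x hx => ?_⟩
  have := hgN (-x)
  rw [neg_neg, infDist_zero_of_mem hx, mul_zero, map_neg] at this
  linarith

end Extension

/-- Bauer–Namioka extension theorem (finite-dimensional case): let `E` be a finite-dimensional
real normed space (`ℝⁿ` with a norm), `C ⊆ E` a convex cone, `F ⊆ E` a subspace and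
`Θ : F → ℝ` linear. If there is a neighborhood `U` of `0` such that `Θ(F ∩ (U + C))` is bounded
from below, then `Θ` extends to a continuous linear functional on `E` which is nonnegative
on `C`. -/
theorem stmt16 {E : Type*} [NormedAddCommGroup E] [NormedSpace ℝ E] [FiniteDimensional ℝ E]
    (C : ConvexCone ℝ E) (F : Subspace ℝ E) (Θ : F →ₗ[ℝ] ℝ)
    (hbdd : ∃ U ∈ nhds (0 : E),
      BddBelow {r : ℝ | ∃ x : F, (x : E) ∈ U + (C : Set E) ∧ Θ x = r}) :
    ∃ Θ' : E →L[ℝ] ℝ, (∀ x : F, Θ' x = Θ x) ∧ ∀ x ∈ C, 0 ≤ Θ' x := by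
  suffices ∃ g : E →ₗ[ℝ] ℝ, (∀ x : F, g x = Θ x) ∧ ∀ x ∈ C, 0 ≤ g x by
    obtain ⟨g, hgΘ, hgC⟩ := this
    exact ⟨LinearMap.toContinuousLinearMap g, hgΘ, hgC⟩
  rcases (C : Set E).eq_empty_or_nonempty with hC | hC
  · obtain ⟨g, hg⟩ := LinearMap.exists_extend Θ
    refine ⟨g, fun x => LinearMap.congr_fun hg x, fun x hx => ?_⟩
    simp [← SetLike.mem_coe, hC] at hx
  obtain ⟨U, hU, m, hm⟩ := hbdd
  obtain ⟨ε, hε, hball⟩ := Metric.mem_nhds_iff.1 hU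
  have hΘ : ∀ x : F, (x : E) ∈ ball 0 ε + (C : Set E) → -(|m| + 1) ≤ Θ x := fun x hx => by
    have := hm ⟨x, Set.add_subset_add_right hball hx, rfl⟩
    linarith [neg_abs_le m]
  exact exists_extension_nonneg_of_le_mul_infDist_neg C Θ (by positivity)
    (le_mul_infDist_neg_of_neg_le_on_ball_add_cone C Θ hC hε (by positivity) hΘ)
end
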